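/- Let s ∈ {0,1}^N be a sampling pattern with m = ‖s‖₀ ones and support S, 0 < m < N, on a connected weighted graph. Then m²(1 − m/N)² ≤ (Σ_{ℓ=2}^N μ_ℓ ŝ(ℓ)²) · (Σ_{ℓ=2}^N ŝ(ℓ)²/μ_ℓ), where ŝ = Uᵀs. -/
import Mathlib


open Finset Matrix

/-- Cauchy–Schwarz step of the redness lemma: for a binary sampling pattern `s` with `m`
ones, `m²(1-m/N)² ≤ (∑_{ℓ≥2} μ_ℓ ŝ(ℓ)²)(∑_{ℓ≥2} ŝ(ℓ)²/μ_ℓ)`, where `ŝ = Uᵀ s`. -/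
theorem stmt_5 {N : ℕ} (hN : 2 ≤ N)
    (W : Matrix (Fin N) (Fin N) ℝ)
    (hWsymm : W.IsSymm)
    (hWnonneg : ∀ u v, 0 ≤ W u v)
    (hWdiag : ∀ u, W u u = 0)
    (L : Matrix (Fin N) (Fin N) ℝ)
    (hL : L = Matrix.diagonal (fun u => ∑ v, W u v) - W)
    (μ : Fin N → ℝ) (U : Matrix (Fin N) (Fin N) ℝ)
    (hU : Uᵀ * U = 1)
    (hμmono : Monotone μ)
    (hμ0 : μ (⟨0, by omega⟩ : Fin N) = 0)
    (hμ2 : 0 < μ (⟨1, by omega⟩ : Fin N))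
    (hU0 : ∀ i, U i (⟨0, by omega⟩ : Fin N) = 1 / Real.sqrt N)
    (heig : ∀ ℓ, L.mulVec (fun i => U i ℓ) = μ ℓ • (fun i => U i ℓ))
    (S : Finset (Fin N)) (s : Fin N → ℝ)
    (hs : ∀ v, s v = if v ∈ S then 1 else 0)
    (m : ℕ) (hm : m = S.card) (hm0 : 0 < m) (hmN : m < N) :
    (m : ℝ) ^ 2 * (1 - (m : ℝ) / N) ^ 2 ≤
      (∑ ℓ ∈ Finset.univ.erase (⟨0, by omega⟩ : Fin N), μ ℓ * ((Uᵀ.mulVec s) ℓ) ^ 2) *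
      (∑ ℓ ∈ Finset.univ.erase (⟨0, by omega⟩ : Fin N), ((Uᵀ.mulVec s) ℓ) ^ 2 / μ ℓ) := by
  have hN0 : (0:ℝ) < N := by positivity
  set e0 : Fin N := ⟨0, by omega⟩ with he0
  set e1 : Fin N := ⟨1, by omega⟩ with he1
  set z := Uᵀ.mulVec s with hz
  have hμpos : ∀ ℓ ∈ Finset.univ.erase e0, 0 < μ ℓ := by
    intro ℓ hℓ
    have hne : ℓ ≠ e0 := (Finset.mem_erase.mp hℓ).1
    have hval : ℓ.val ≠ 0 := fun h => hne (Fin.ext h)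
    have h1 : e1 ≤ ℓ := by
      simp only [he1, Fin.le_def]; omega
    exact lt_of_lt_of_le hμ2 (hμmono h1)
  have hsq : ∀ v, (s v)^2 = s v := by
    intro v; rw [hs]; split <;> norm_num
  have hsumS : ∑ v, s v = (m:ℝ) := by
    simp [hs, hm]
  have hsumSq : ∑ v, (s v)^2 = (m:ℝ) := by
    rw [Finset.sum_congr rfl fun v _ => hsq v, hsumS]
  have hsqrtN : (0:ℝ) < Real.sqrt N := Real.sqrt_pos.mpr hN0
  have hz0 : z e0 = m / Real.sqrt N := by
    simp only [hz, Matrix.mulVec, dotProduct, Matrix.transpose_apply, hU0]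
    rw [← Finset.mul_sum, hsumS]; ring
  have hUUT : U * Uᵀ = 1 := mul_eq_one_comm.mp hU
  have htotal : ∑ ℓ, (z ℓ)^2 = (m:ℝ) := by
    have h1 : ∑ ℓ, (z ℓ)^2 = z ⬝ᵥ z := by simp [dotProduct, sq]
    have h2 : z ⬝ᵥ z = s ⬝ᵥ s := by
      rw [hz, Matrix.dotProduct_mulVec, Matrix.vecMul_transpose,
        Matrix.mulVec_mulVec, hUUT, Matrix.one_mulVec]
    rw [h1, h2]
    simpa [dotProduct, sq] using hsumSq
  have herase : ∑ ℓ ∈ Finset.univ.erase e0, (z ℓ)^2 = (m:ℝ) - (m:ℝ)^2 / N := by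
    rw [Finset.sum_erase_eq_sub (Finset.mem_univ e0), htotal, hz0, div_pow,
      Real.sq_sqrt hN0.le]
  have key := Finset.sum_mul_sq_le_sq_mul_sq (Finset.univ.erase e0)
    (fun ℓ => Real.sqrt (μ ℓ) * z ℓ) (fun ℓ => z ℓ / Real.sqrt (μ ℓ))
  have h3 : ∑ ℓ ∈ Finset.univ.erase e0,
      (Real.sqrt (μ ℓ) * z ℓ) * (z ℓ / Real.sqrt (μ ℓ)) = ∑ ℓ ∈ Finset.univ.erase e0, (z ℓ)^2 := by
    refine Finset.sum_congr rfl fun ℓ hℓ => ?_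
    have := hμpos ℓ hℓ
    have hsμ : Real.sqrt (μ ℓ) ≠ 0 := ne_of_gt (Real.sqrt_pos.mpr this)
    field_simp
  have h4 : ∑ ℓ ∈ Finset.univ.erase e0, (Real.sqrt (μ ℓ) * z ℓ)^2
      = ∑ ℓ ∈ Finset.univ.erase e0, μ ℓ * (z ℓ)^2 := by
    refine Finset.sum_congr rfl fun ℓ hℓ => ?_
    rw [mul_pow, Real.sq_sqrt (hμpos ℓ hℓ).le]
  have h5 : ∑ ℓ ∈ Finset.univ.erase e0, (z ℓ / Real.sqrt (μ ℓ))^2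
      = ∑ ℓ ∈ Finset.univ.erase e0, (z ℓ)^2 / μ ℓ := by
    refine Finset.sum_congr rfl fun ℓ hℓ => ?_
    rw [div_pow, Real.sq_sqrt (hμpos ℓ hℓ).le]
  rw [h3, h4, h5, herase] at key
  calc (m : ℝ) ^ 2 * (1 - (m : ℝ) / N) ^ 2 = ((m:ℝ) - (m:ℝ)^2/N)^2 := by
        field_simp
    _ ≤ _ := key
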